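/- Suppose in addition that m is T-periodic (T > 0) and m(t) > 0 for all t. Then the solution q_s of q̇ = m(t)q − (σ/2)q² with initial value q_s(0) = (exp(∫₀ᵀ m(t₁) dt₁) − 1) / ((σ/2) ∫₀ᵀ exp(∫₀^{t₁} m(t₂) dt₂) dt₁) is T-periodic, and it attracts all positive solutions: for every solution q with q(0) > 0 one has |q(t) − q_s(t)| → 0 as t → ∞. -/

import Mathlib

open Filter Topology

/-!
With `E(t) = exp ∫₀ᵗ m` and `I(t) = ∫₀ᵗ E`, the substitution `u = 1/q` linearises the
equation, and every solution defined on all of `ℝ` is `q(t) = q(0) E(t) / (1 + q(0) (σ/2) I(t))`;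
in particular a solution is determined by its value at `0`. The prescribed `q_s(0)` is the unique
nonzero value with `q_s(T) = q_s(0)`, so `q_s(· + T)`, which solves the same equation because `m`
is `T`-periodic, coincides with `q_s`. For two positive solutions with initial values `a`, `b`,
`q - q_s = (a - b)/(a b) · (q / E) · q_s`, where `q / E = a / (1 + a (σ/2) I) → 0` because
`I(t) ≥ t`, and `q_s` is bounded, being continuous and periodic.
-/

noncomputable def growthFactor (m : ℝ → ℝ) (t : ℝ) : ℝ :=
  Real.exp (∫ s in (0 : ℝ)..t, m s)

noncomputable def integralGrowthFactor (m : ℝ → ℝ) (t : ℝ) : ℝ :=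
  ∫ s in (0 : ℝ)..t, growthFactor m s

def IsLogisticSolution (m : ℝ → ℝ) (c : ℝ) (q : ℝ → ℝ) : Prop :=
  ∀ t, HasDerivAt q (m t * q t - c * q t ^ 2) t

theorem eq_zero_of_hasDerivAt_eq_mul {a d : ℝ → ℝ} (ha : Continuous a)
    (hd : ∀ t, HasDerivAt d (a t * d t) t) (h0 : d 0 = 0) (t : ℝ) : d t = 0 := by
  set A : ℝ → ℝ := fun t => ∫ s in (0 : ℝ)..t, a s
  have hA : ∀ t, HasDerivAt A (a t) t := fun t => (ha.integral_hasStrictDerivAt 0 t).hasDerivAt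
  have hderiv : ∀ t, HasDerivAt (fun u => d u * Real.exp (-A u)) 0 t := fun t =>
    ((hd t).fun_mul (hA t).fun_neg.exp).congr_deriv (by ring)
  have hconst : d t * Real.exp (-A t) = d 0 * Real.exp (-A 0) :=
    is_const_of_deriv_eq_zero (fun x => (hderiv x).differentiableAt) (fun x => (hderiv x).deriv)
      t 0
  rw [h0, zero_mul] at hconst
  exact (mul_eq_zero.1 hconst).resolve_right (Real.exp_ne_zero _)

section GrowthFactor

variable {m : ℝ → ℝ}

variable (m) in
theorem growthFactor_pos (t : ℝ) : 0 < growthFactor m t :=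
  Real.exp_pos _

variable (m) in
@[simp]
theorem growthFactor_zero : growthFactor m 0 = 1 := by
  simp [growthFactor]

theorem hasDerivAt_growthFactor (hm : Continuous m) (t : ℝ) :
    HasDerivAt (growthFactor m) (m t * growthFactor m t) t := by
  rw [mul_comm]
  exact (hm.integral_hasStrictDerivAt 0 t).hasDerivAt.exp

theorem continuous_growthFactor (hm : Continuous m) : Continuous (growthFactor m) :=
  continuous_iff_continuousAt.2 fun t => (hasDerivAt_growthFactor hm t).continuousAt

theorem one_le_growthFactor {t : ℝ} (ht : 0 ≤ t) (hm₀ : ∀ s ∈ Set.Icc 0 t, 0 ≤ m s) :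
    1 ≤ growthFactor m t :=
  Real.one_le_exp (intervalIntegral.integral_nonneg ht hm₀)

theorem one_lt_growthFactor (hm : Continuous m) {t : ℝ} (ht : 0 < t)
    (hm₀ : ∀ s ∈ Set.Ioo 0 t, 0 < m s) : 1 < growthFactor m t :=
  Real.one_lt_exp_iff.2
    (intervalIntegral.intervalIntegral_pos_of_pos_on (hm.intervalIntegrable _ _) hm₀ ht)

variable (m) in
@[simp]
theorem integralGrowthFactor_zero : integralGrowthFactor m 0 = 0 :=
  intervalIntegral.integral_same

theorem hasDerivAt_integralGrowthFactor (hm : Continuous m) (t : ℝ) :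
    HasDerivAt (integralGrowthFactor m) (growthFactor m t) t :=
  ((continuous_growthFactor hm).integral_hasStrictDerivAt 0 t).hasDerivAt

theorem le_integralGrowthFactor (hm : Continuous m) {t : ℝ} (ht : 0 ≤ t)
    (hm₀ : ∀ s ∈ Set.Icc 0 t, 0 ≤ m s) : t ≤ integralGrowthFactor m t := by
  have hle : ∫ _ in (0 : ℝ)..t, (1 : ℝ) ≤ integralGrowthFactor m t :=
    intervalIntegral.integral_mono_on ht intervalIntegrable_const
      ((continuous_growthFactor hm).intervalIntegrable _ _)
      fun s hs => one_le_growthFactor hs.1 fun u hu => hm₀ u ⟨hu.1, hu.2.trans hs.2⟩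
  simpa using hle

theorem tendsto_integralGrowthFactor_atTop (hm : Continuous m) (hm₀ : ∀ t, 0 ≤ m t) :
    Tendsto (integralGrowthFactor m) atTop atTop :=
  tendsto_atTop_mono' atTop
    ((eventually_ge_atTop 0).mono fun _ ht => le_integralGrowthFactor hm ht fun s _ => hm₀ s)
    tendsto_id

end GrowthFactor

namespace IsLogisticSolution

variable {m : ℝ → ℝ} {c : ℝ} {q p : ℝ → ℝ}

theorem continuous (hq : IsLogisticSolution m c q) : Continuous q :=
  continuous_iff_continuousAt.2 fun t => (hq t).continuousAt

theorem mul_eq (hm : Continuous m) (hq : IsLogisticSolution m c q) (t : ℝ) :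
    q t * (1 + q 0 * c * integralGrowthFactor m t) = q 0 * growthFactor m t := by
  have hderiv : ∀ t, HasDerivAt
      (fun t => q t * (1 + q 0 * c * integralGrowthFactor m t) - q 0 * growthFactor m t)
      ((m t - c * q t) *
        (q t * (1 + q 0 * c * integralGrowthFactor m t) - q 0 * growthFactor m t)) t := fun t =>
    (((hq t).fun_mul
      (((hasDerivAt_integralGrowthFactor hm t).const_mul (q 0 * c)).const_add 1)).fun_sub
        ((hasDerivAt_growthFactor hm t).const_mul (q 0))).congr_deriv (by ring)
  exact sub_eq_zero.1
    (eq_zero_of_hasDerivAt_eq_mul (hm.sub (continuous_const.mul hq.continuous)) hderiv (by simp) t)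

theorem one_add_mul_integralGrowthFactor_ne_zero (hm : Continuous m)
    (hq : IsLogisticSolution m c q) (t : ℝ) : 1 + q 0 * c * integralGrowthFactor m t ≠ 0 := by
  intro h
  have h0 : q 0 = 0 := by
    simpa [h, (growthFactor_pos m t).ne'] using (hq.mul_eq hm t).symm
  simp [h0] at h

theorem eq_div (hm : Continuous m) (hq : IsLogisticSolution m c q) (t : ℝ) :
    q t = q 0 * growthFactor m t / (1 + q 0 * c * integralGrowthFactor m t) :=
  eq_div_of_mul_eq (hq.one_add_mul_integralGrowthFactor_ne_zero hm t) (hq.mul_eq hm t)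

theorem eq_of_apply_zero_eq (hm : Continuous m) (hq : IsLogisticSolution m c q)
    (hp : IsLogisticSolution m c p) (h0 : q 0 = p 0) : q = p := by
  ext t
  rw [hq.eq_div hm t, hp.eq_div hm t, h0]

theorem comp_add_const {T : ℝ} (hper : Function.Periodic m T) (hq : IsLogisticSolution m c q) :
    IsLogisticSolution m c fun t => q (t + T) := fun t => by
  simpa [hper t] using (hq (t + T)).comp_add_const t T

theorem periodic_of_apply_eq {T : ℝ} (hm : Continuous m) (hper : Function.Periodic m T)
    (hq : IsLogisticSolution m c q) (hT : q T = q 0) : Function.Periodic q T :=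
  congrFun ((hq.comp_add_const hper).eq_of_apply_zero_eq hm hq (by simpa using hT))

theorem apply_eq_of_apply_zero_eq {T : ℝ} (hm : Continuous m) (hq : IsLogisticSolution m c q)
    (hc : c ≠ 0) (hI : integralGrowthFactor m T ≠ 0)
    (h0 : q 0 = (growthFactor m T - 1) / (c * integralGrowthFactor m T)) : q T = q 0 := by
  have hden : 1 + q 0 * c * integralGrowthFactor m T = growthFactor m T := by
    rw [h0]
    field_simp
    ring
  have h := hq.mul_eq hm T
  rw [hden] at h
  exact mul_right_cancel₀ (growthFactor_pos m T).ne' h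

theorem tendsto_div_growthFactor (hm : Continuous m) (hm₀ : ∀ t, 0 ≤ m t) (hc : 0 < c)
    (hq : IsLogisticSolution m c q) (hq0 : 0 < q 0) :
    Tendsto (fun t => q t / growthFactor m t) atTop (𝓝 0) := by
  have hden : Tendsto (fun t => 1 + q 0 * c * integralGrowthFactor m t) atTop atTop :=
    tendsto_atTop_add_const_left _ 1
      ((tendsto_integralGrowthFactor_atTop hm hm₀).const_mul_atTop (mul_pos hq0 hc))
  refine ((tendsto_const_nhds (x := q 0)).div_atTop hden).congr fun t => ?_
  rw [hq.eq_div hm t, mul_div_right_comm, mul_div_cancel_right₀ _ (growthFactor_pos m t).ne']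

theorem sub_eq (hm : Continuous m) (hq : IsLogisticSolution m c q)
    (hp : IsLogisticSolution m c p) (hq0 : q 0 ≠ 0) (hp0 : p 0 ≠ 0) (t : ℝ) :
    q t - p t = (q 0 - p 0) / (q 0 * p 0) * (q t / growthFactor m t) * p t := by
  have hDq := hq.one_add_mul_integralGrowthFactor_ne_zero hm t
  have hDp := hp.one_add_mul_integralGrowthFactor_ne_zero hm t
  rw [hq.eq_div hm t, hp.eq_div hm t, div_sub_div _ _ hDq hDp]
  field_simp
  ring

theorem tendsto_abs_sub (hm : Continuous m) (hm₀ : ∀ t, 0 ≤ m t) (hc : 0 < c)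
    (hq : IsLogisticSolution m c q) (hp : IsLogisticSolution m c p) (hq0 : 0 < q 0)
    (hp0 : p 0 ≠ 0) (hpb : IsBoundedUnder (· ≤ ·) atTop (norm ∘ p)) :
    Tendsto (fun t => |q t - p t|) atTop (𝓝 0) := by
  have hratio : Tendsto (fun t => (q 0 - p 0) / (q 0 * p 0) * (q t / growthFactor m t))
      atTop (𝓝 0) := by
    simpa using (hq.tendsto_div_growthFactor hm hm₀ hc hq0).const_mul ((q 0 - p 0) / (q 0 * p 0))
  have hlim := hratio.zero_mul_isBoundedUnder_le hpb
  simpa [← hq.sub_eq hm hp hq0.ne' hp0] using hlim.abs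

end IsLogisticSolution

theorem periodic_logistic_attractor (σ : ℝ) (hσ : 0 < σ)
    (m : ℝ → ℝ) (hm : Continuous m) (T : ℝ) (hT : 0 < T)
    (hper : Function.Periodic m T) (hpos : ∀ t, 0 < m t)
    (qs : ℝ → ℝ)
    (hqs0 : qs 0 = (Real.exp (∫ t₁ in (0 : ℝ)..T, m t₁) - 1) /
      (σ / 2 * ∫ t₁ in (0 : ℝ)..T, Real.exp (∫ t₂ in (0 : ℝ)..t₁, m t₂)))
    (hqs : ∀ t : ℝ, HasDerivAt qs (m t * qs t - σ / 2 * (qs t) ^ 2) t) :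
    (∀ t : ℝ, qs (t + T) = qs t) ∧
    ∀ q : ℝ → ℝ, 0 < q 0 →
      (∀ t : ℝ, HasDerivAt q (m t * q t - σ / 2 * (q t) ^ 2) t) →
      Tendsto (fun t => |q t - qs t|) atTop (𝓝 0) := by
  have hqs : IsLogisticSolution m (σ / 2) qs := hqs
  have hm₀ : ∀ t, 0 ≤ m t := fun t => (hpos t).le
  have hIT : 0 < integralGrowthFactor m T :=
    hT.trans_le (le_integralGrowthFactor hm hT.le fun s _ => hm₀ s)
  have hqs_per : Function.Periodic qs T := hqs.periodic_of_apply_eq hm hper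
    (hqs.apply_eq_of_apply_zero_eq hm (by positivity) hIT.ne' hqs0)
  have hqs0_pos : 0 < qs 0 := by
    rw [hqs0]
    exact div_pos (sub_pos.2 (one_lt_growthFactor hm hT fun s _ => hpos s)) (by positivity)
  obtain ⟨C, hC⟩ :=
    isBounded_iff_forall_norm_le.1 (hqs_per.isBounded_of_continuous hT.ne' hqs.continuous)
  exact ⟨hqs_per, fun q hq0 hq => IsLogisticSolution.tendsto_abs_sub hm hm₀ (by positivity)
    hq hqs hq0 hqs0_pos.ne' (isBoundedUnder_of ⟨C, fun t => hC _ (Set.mem_range_self t)⟩)⟩
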